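/- arXiv:1706.03422 — 2 statements merged into one kernel-verified Lean document; each statement's English description precedes it below -/
import Mathlib

section
/- Let f, g : ℕ+ → ℂ^× be arithmetic functions with g multiplicative and ∑_{m≥1} |g(m)| convergent. Suppose there exist M ∈ ℕ+ and κ ∈ ℂ with Re(κ) > 0 such that: (a) f(m₁m₂) = f(m₁)g(m₂) whenever every prime dividing m₁ divides M and gcd(m₂, M) = 1; and (b) f(ℓ^{v_ℓ(M)+δ} d) = ℓ^{−δκ} f(ℓ^{v_ℓ(M)} d) for all primes ℓ ∣ M, all d with d ∣ M^∞ and ℓ ∤ d, and all δ ∈ ℕ. Then ∑_{m≥1} |f(m)| ≤ (∏_{ℓ ∣ M} (1 − |ℓ^κ|^{-1})^{-1}) · (∑_{m ∣ M} |f(m)|) · (∑_{m≥1} |g(m)|). -/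
set_option maxHeartbeats 1000000

open Real in
lemma smooth_hasSum (c : ℝ) (hc : 0 < c) :
    ∀ s : Finset ℕ, (∀ p ∈ s, p.Prime) →
    HasSum (fun e : {n : ℕ // 0 < n ∧ ∀ p, p.Prime → p ∣ n → p ∈ s} => ((e : ℕ) : ℝ) ^ (-c))
      (∏ ℓ ∈ s, (1 - (ℓ : ℝ) ^ (-c))⁻¹) := by
  intro s
  induction s using Finset.induction with
  | empty =>
    intro _
    have hone : (0 : ℕ) < 1 ∧ ∀ p, p.Prime → p ∣ 1 → p ∈ (∅ : Finset ℕ) := by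
      refine ⟨one_pos, fun p hp hd => absurd (Nat.eq_one_of_dvd_one hd) hp.ne_one⟩
    letI : Unique {n : ℕ // 0 < n ∧ ∀ p, p.Prime → p ∣ n → p ∈ (∅ : Finset ℕ)} := by
      refine ⟨⟨⟨1, hone⟩⟩, ?_⟩
      rintro ⟨n, hn, hn2⟩
      ext
      by_contra h
      obtain ⟨p, hp, hpd⟩ := Nat.exists_prime_and_dvd (by simpa using h)
      exact absurd (hn2 p hp hpd) (Finset.notMem_empty p)
    have h := hasSum_fintype
      (fun e : {n : ℕ // 0 < n ∧ ∀ p, p.Prime → p ∣ n → p ∈ (∅ : Finset ℕ)} => ((e : ℕ) : ℝ) ^ (-c))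
    rw [show (∑ e : {n : ℕ // 0 < n ∧ ∀ p, p.Prime → p ∣ n → p ∈ (∅ : Finset ℕ)},
        ((e : ℕ) : ℝ) ^ (-c)) = 1 from by
      rw [Fintype.sum_unique]
      norm_num [show ((default : {n : ℕ // 0 < n ∧ ∀ p, p.Prime → p ∣ n → p ∈ (∅ : Finset ℕ)}) : ℕ)
        = 1 from rfl]] at h
    simpa using h
  | @insert p s hps ih =>
    intro hpr
    have hp : p.Prime := hpr p (Finset.mem_insert_self p s)
    have hs : ∀ q ∈ s, q.Prime := fun q hq => hpr q (Finset.mem_insert_of_mem hq)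
    have h2 := ih hs
    -- the equiv
    set T := {n : ℕ // 0 < n ∧ ∀ q, q.Prime → q ∣ n → q ∈ s}
    set T' := {n : ℕ // 0 < n ∧ ∀ q, q.Prime → q ∣ n → q ∈ insert p s}
    have hpm : ∀ m : T, ¬ p ∣ (m : ℕ) := by
      rintro ⟨m, hm1, hm2⟩ hd
      exact hps (hm2 p hp hd)
    let E : ℕ × T ≃ T' :=
      { toFun := fun x => ⟨p ^ x.1 * (x.2 : ℕ), by
          constructor
          · exact Nat.mul_pos (pow_pos hp.pos _) x.2.2.1
          · intro q hq hqd
            rcases (Nat.Prime.dvd_mul hq).mp hqd with h | h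
            · rcases (Nat.prime_dvd_prime_iff_eq hq hp).mp (hq.dvd_of_dvd_pow h)
              exact Finset.mem_insert_self _ _
            · exact Finset.mem_insert_of_mem (x.2.2.2 q hq h)⟩
        invFun := fun n => ((n : ℕ).factorization p, ⟨ordCompl[p] (n : ℕ), by
          constructor
          · exact Nat.ordCompl_pos p n.2.1.ne'
          · intro q hq hqd
            have hqn : q ∣ (n : ℕ) := hqd.trans (Nat.ordCompl_dvd _ _)
            have := n.2.2 q hq hqn
            rcases Finset.mem_insert.mp this with h | h
            · subst h
              exact absurd hqd (Nat.not_dvd_ordCompl hq n.2.1.ne')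
            · exact h⟩)
        left_inv := by
          rintro ⟨k, m⟩
          have hm0 : (m : ℕ) ≠ 0 := m.2.1.ne'
          have hfac : (p ^ k * (m : ℕ)).factorization p = k := by
            rw [Nat.factorization_mul (pow_ne_zero _ hp.pos.ne') hm0]
            simp [hp.factorization_pow, Nat.factorization_eq_zero_of_not_dvd (hpm m)]
          refine Prod.ext ?_ (Subtype.ext ?_)
          · simpa using hfac
          · show ordCompl[p] (p ^ k * (m : ℕ)) = (m : ℕ)
            rw [hfac]
            exact Nat.mul_div_cancel_left _ (pow_pos hp.pos _)
        right_inv := by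
          rintro ⟨n, hn⟩
          exact Subtype.ext (Nat.ordProj_mul_ordCompl_eq_self n p) }
    have hgeo : HasSum (fun k : ℕ => ((p : ℝ) ^ (-c)) ^ k) (1 - (p : ℝ) ^ (-c))⁻¹ := by
      refine hasSum_geometric_of_lt_one (rpow_nonneg (Nat.cast_nonneg p) _) ?_
      exact rpow_lt_one_of_one_lt_of_neg (by exact_mod_cast hp.one_lt) (neg_neg_of_pos hc)
    have hsummable : Summable (fun x : ℕ × T => ((p : ℝ) ^ (-c)) ^ x.1 * ((x.2 : ℕ) : ℝ) ^ (-c)) :=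
      hgeo.summable.mul_of_nonneg h2.summable
        (fun k => pow_nonneg (rpow_nonneg (Nat.cast_nonneg p) _) _)
        (fun m => rpow_nonneg (Nat.cast_nonneg _) _)
    have hmul : HasSum (fun x : ℕ × T => ((p : ℝ) ^ (-c)) ^ x.1 * ((x.2 : ℕ) : ℝ) ^ (-c))
        ((1 - (p : ℝ) ^ (-c))⁻¹ * ∏ ℓ ∈ s, (1 - (ℓ : ℝ) ^ (-c))⁻¹) :=
      hgeo.mul h2 hsummable
    have hcomp : ((fun e : T' => ((e : ℕ) : ℝ) ^ (-c)) ∘ E)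
        = fun x : ℕ × T => ((p : ℝ) ^ (-c)) ^ x.1 * ((x.2 : ℕ) : ℝ) ^ (-c) := by
      funext x
      show ((p ^ x.1 * (x.2 : ℕ) : ℕ) : ℝ) ^ (-c) = _
      have hp0 : (0 : ℝ) ≤ (p : ℝ) := Nat.cast_nonneg p
      push_cast
      rw [Real.mul_rpow (pow_nonneg hp0 _) (Nat.cast_nonneg _)]
      congr 1
      rw [← Real.rpow_natCast (p : ℝ) x.1, ← Real.rpow_mul hp0, mul_comm, Real.rpow_mul hp0,
        Real.rpow_natCast]
    rw [Finset.prod_insert hps]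
    exact E.hasSum_iff.mp (hcomp.symm ▸ hmul)


lemma keyB (f : ℕ → ℂ) (M : ℕ) (hM : 0 < M) (κ : ℂ)
    (hb : ∀ ℓ : ℕ, ℓ.Prime → ℓ ∣ M → ∀ d : ℕ, 0 < d →
      (∀ p : ℕ, p.Prime → p ∣ d → p ∣ M) → ¬ ℓ ∣ d → ∀ δ : ℕ,
      f (ℓ ^ (M.factorization ℓ + δ) * d) =
        (ℓ : ℂ) ^ (-(δ : ℂ) * κ) * f (ℓ ^ (M.factorization ℓ) * d)) :
    ∀ a : ℕ, 0 < a → (∀ p, p.Prime → p ∣ a → p ∣ M) →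
      ‖f a‖ = ((a / a.gcd M : ℕ) : ℝ) ^ (-κ.re) * ‖f (a.gcd M)‖ := by
  intro a
  induction a using Nat.strong_induction_on with
  | _ a IH =>
    intro ha hap
    have ha0 : a ≠ 0 := ha.ne'
    have hM0 : M ≠ 0 := hM.ne'
    have hdvd : a.gcd M ∣ a := Nat.gcd_dvd_left a M
    by_cases he1 : a / a.gcd M = 1
    · have hda : a.gcd M = a := by
        have := Nat.mul_div_cancel' hdvd
        rw [he1, mul_one] at this
        exact this
      rw [he1, hda]
      simp
    · obtain ⟨ℓ, hℓp, hℓe⟩ := Nat.exists_prime_and_dvd he1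
      have hℓa : ℓ ∣ a := hℓe.trans (Nat.div_dvd_of_dvd hdvd)
      have hℓM : ℓ ∣ M := hap ℓ hℓp hℓa
      set w := a.factorization ℓ with hw
      set v := M.factorization ℓ with hv
      have he0 : a / a.gcd M ≠ 0 := by
        have := Nat.div_pos (Nat.le_of_dvd ha hdvd) (Nat.gcd_pos_of_pos_left M ha)
        exact this.ne'
      have hvw : v < w := by
        have hpos := hℓp.factorization_pos_of_dvd he0 hℓe
        rw [Nat.factorization_div hdvd] at hpos
        rw [Nat.factorization_gcd ha0 hM0] at hpos
        simp only [Finsupp.tsub_apply, Finsupp.inf_apply] at hpos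
        omega
      set δ := w - v with hδ
      have hδ0 : δ ≠ 0 := by omega
      set d' := ordCompl[ℓ] a with hd'
      have hd'0 : d' ≠ 0 := (Nat.ordCompl_pos ℓ ha0).ne'
      have hnd : ¬ ℓ ∣ d' := Nat.not_dvd_ordCompl hℓp ha0
      have hd'p : ∀ p, p.Prime → p ∣ d' → p ∣ M := fun p hp hpd =>
        hap p hp (hpd.trans (Nat.ordCompl_dvd a ℓ))
      have ha_eq : a = ℓ ^ (v + δ) * d' := by
        have h1 : v + δ = w := by omega
        rw [h1]
        exact (Nat.ordProj_mul_ordCompl_eq_self a ℓ).symm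
      have hfb := hb ℓ hℓp hℓM d' (Nat.pos_of_ne_zero hd'0) hd'p hnd δ
      rw [← hv, ← ha_eq] at hfb
      set a' := ℓ ^ v * d' with ha'
      have ha'0 : a' ≠ 0 := Nat.mul_ne_zero (pow_ne_zero _ hℓp.pos.ne') hd'0
      have haa' : a = ℓ ^ δ * a' := by
        rw [ha_eq, ha', ← mul_assoc, ← pow_add]
        ring_nf
      have ha'lt : a' < a := by
        rw [haa']
        refine lt_mul_of_one_lt_left (Nat.pos_of_ne_zero ha'0) ?_ |>.trans_le le_rfl
        exact Nat.one_lt_pow hδ0 hℓp.one_lt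
      have ha'p : ∀ p, p.Prime → p ∣ a' → p ∣ M := by
        intro p hp hpd
        rcases (Nat.Prime.dvd_mul hp).mp hpd with h | h
        · rcases (Nat.prime_dvd_prime_iff_eq hp hℓp).mp (hp.dvd_of_dvd_pow h)
          exact hℓM
        · exact hd'p p hp h
      have hIH := IH a' ha'lt (Nat.pos_of_ne_zero ha'0) ha'p
      -- gcd a' M = gcd a M
      have hgcd : a'.gcd M = a.gcd M := by
        have h1 : a'.gcd M ≠ 0 := (Nat.gcd_pos_of_pos_right a' hM).ne'
        have h2 : a.gcd M ≠ 0 := (Nat.gcd_pos_of_pos_right a hM).ne'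
        refine Nat.factorization_inj h1 h2 ?_
        rw [Nat.factorization_gcd ha'0 hM0, Nat.factorization_gcd ha0 hM0]
        ext q
        simp only [Finsupp.inf_apply]
        have hfa' : a'.factorization q = if q = ℓ then v else a.factorization q := by
          rw [ha', Nat.factorization_mul (pow_ne_zero _ hℓp.pos.ne') hd'0]
          rw [hℓp.factorization_pow, hd', Nat.factorization_ordCompl]
          simp only [Finsupp.add_apply, Finsupp.single_apply, Finsupp.erase_apply]
          by_cases hq : q = ℓ
          · subst hq
            simp
          · simp [hq, Ne.symm hq]
        rw [hfa']
        by_cases hq : q = ℓ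
        · subst hq
          rw [if_pos rfl, ← hw, ← hv, inf_idem, inf_eq_right.mpr hvw.le]
        · rw [if_neg hq]
      -- e = ℓ^δ * e'
      have hddvd' : a.gcd M ∣ a' := by
        rw [← hgcd]; exact Nat.gcd_dvd_left a' M
      have heq : a / a.gcd M = ℓ ^ δ * (a' / a.gcd M) := by
        rw [← Nat.mul_div_assoc _ hddvd', ← haa']
      -- norm of the cpow factor
      have hnorm : ‖(ℓ : ℂ) ^ (-(δ : ℂ) * κ)‖ = (ℓ : ℝ) ^ (-(δ : ℝ) * κ.re) := by
        rw [Complex.norm_natCast_cpow_of_pos hℓp.pos]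
        congr 1
        simp [Complex.mul_re]
      have hℓ0 : (0 : ℝ) ≤ (ℓ : ℝ) := Nat.cast_nonneg ℓ
      have hpow : ((ℓ ^ δ : ℕ) : ℝ) ^ (-κ.re) = (ℓ : ℝ) ^ (-(δ : ℝ) * κ.re) := by
        push_cast
        rw [← Real.rpow_natCast (ℓ : ℝ) δ, ← Real.rpow_mul hℓ0]
        congr 1
        ring
      calc ‖f a‖ = ‖(ℓ : ℂ) ^ (-(δ : ℂ) * κ)‖ * ‖f a'‖ := by rw [hfb, norm_mul]
        _ = (ℓ : ℝ) ^ (-(δ : ℝ) * κ.re) *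
            (((a' / a'.gcd M : ℕ) : ℝ) ^ (-κ.re) * ‖f (a'.gcd M)‖) := by rw [hnorm, hIH]
        _ = ((a / a.gcd M : ℕ) : ℝ) ^ (-κ.re) * ‖f (a.gcd M)‖ := by
            rw [hgcd, heq]
            push_cast
            rw [Real.mul_rpow (by positivity) (Nat.cast_nonneg _), ← hpow]
            push_cast
            ring


lemma keyC (M m : ℕ) (hM : 0 < M) (hm : 0 < m) :
    0 < Nat.gcd m (M ^ m) ∧ Nat.gcd m (M ^ m) ∣ m ∧
      (∀ p, p.Prime → p ∣ Nat.gcd m (M ^ m) → p ∣ M) ∧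
      Nat.Coprime (m / Nat.gcd m (M ^ m)) M := by
  set a := Nat.gcd m (M ^ m) with ha
  have hMm0 : M ^ m ≠ 0 := pow_ne_zero _ hM.ne'
  have hapos : 0 < a := Nat.gcd_pos_of_pos_left _ hm
  have hadvd : a ∣ m := Nat.gcd_dvd_left m (M ^ m)
  refine ⟨hapos, hadvd, ?_, ?_⟩
  · intro p hp hpa
    exact hp.dvd_of_dvd_pow ((hpa.trans (Nat.gcd_dvd_right m (M ^ m))))
  · by_contra hcop
    obtain ⟨q, hq, hqb, hqM⟩ := Nat.Prime.not_coprime_iff_dvd.mp hcop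
    have hb0 : m / a ≠ 0 := (Nat.div_pos (Nat.le_of_dvd hm hadvd) hapos).ne'
    have hqm : q ∣ m := hqb.trans (Nat.div_dvd_of_dvd hadvd)
    have h1 : 1 ≤ (m / a).factorization q := hq.factorization_pos_of_dvd hb0 hqb
    rw [Nat.factorization_div hadvd] at h1
    rw [ha, Nat.factorization_gcd hm.ne' hMm0, Nat.factorization_pow] at h1
    simp only [Finsupp.tsub_apply, Finsupp.inf_apply, Finsupp.smul_apply, smul_eq_mul] at h1
    have h2 : m.factorization q < m := Nat.factorization_lt q hm.ne'
    have h3 : 1 ≤ M.factorization q := hq.factorization_pos_of_dvd hM.ne' hqM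
    have h4 : m.factorization q ⊓ (m * M.factorization q) = m.factorization q := by
      refine inf_eq_left.mpr ?_
      calc m.factorization q ≤ m := h2.le
        _ ≤ m * M.factorization q := Nat.le_mul_of_pos_right m h3
    rw [h4] at h1
    omega


def auxA (M : ℕ) (m : ℕ+) : ℕ := Nat.gcd (m : ℕ) (M ^ (m : ℕ))

lemma keyC' (M : ℕ) (hM : 0 < M) (m : ℕ+) :
    0 < auxA M m ∧ auxA M m ∣ (m : ℕ) ∧ (∀ p, p.Prime → p ∣ auxA M m → p ∣ M) ∧
      Nat.Coprime ((m : ℕ) / auxA M m) M :=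
  keyC M (m : ℕ) hM m.2

def auxι (M : ℕ) (hM : 0 < M) (m : ℕ+) :
    {d : ℕ // d ∈ M.divisors} ×
      ({n : ℕ // 0 < n ∧ ∀ p, p.Prime → p ∣ n → p ∈ M.primeFactors} × ℕ+) :=
  (⟨(auxA M m).gcd M, Nat.mem_divisors.mpr ⟨Nat.gcd_dvd_right _ _, hM.ne'⟩⟩,
   ⟨⟨auxA M m / (auxA M m).gcd M,
      ⟨Nat.div_pos (Nat.le_of_dvd (keyC' M hM m).1 (Nat.gcd_dvd_left _ _))
        (Nat.gcd_pos_of_pos_left _ (keyC' M hM m).1),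
       fun p hp hpd => Nat.mem_primeFactors.mpr
         ⟨hp, (keyC' M hM m).2.2.1 p hp (hpd.trans (Nat.div_dvd_of_dvd (Nat.gcd_dvd_left _ _))),
          hM.ne'⟩⟩⟩,
    ⟨(m : ℕ) / auxA M m,
      Nat.div_pos (Nat.le_of_dvd m.2 (keyC' M hM m).2.1) (keyC' M hM m).1⟩⟩)

lemma auxι_eq (M : ℕ) (hM : 0 < M) (m : ℕ+) :
    (m : ℕ) = ((auxι M hM m).1 : ℕ) * ((auxι M hM m).2.1 : ℕ) * (((auxι M hM m).2.2 : ℕ+) : ℕ) := by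
  show (m : ℕ) = (auxA M m).gcd M * (auxA M m / (auxA M m).gcd M) * ((m : ℕ) / auxA M m)
  rw [Nat.mul_div_cancel' (Nat.gcd_dvd_left _ _), Nat.mul_div_cancel' (keyC' M hM m).2.1]

lemma auxι_inj (M : ℕ) (hM : 0 < M) : Function.Injective (auxι M hM) := by
  intro m₁ m₂ h
  have h1 := auxι_eq M hM m₁
  rw [h, ← auxι_eq M hM m₂] at h1
  exact PNat.coe_injective h1


/-- Lemma 3.2 of the paper: let `f, g : ℕ⁺ → ℂˣ` with `g` multiplicative and `∑ |g(m)|`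
convergent.  Suppose there are `M ≥ 1` and `κ ∈ ℂ` with `Re κ > 0` such that
(a) `f(m₁m₂) = f(m₁)g(m₂)` whenever every prime of `m₁` divides `M` and `gcd(m₂,M) = 1`, and
(b) `f(ℓ^{v_ℓ(M)+δ} d) = ℓ^{−δκ} f(ℓ^{v_ℓ(M)} d)` for all primes `ℓ ∣ M`, all `d ∣ M^∞` with
`ℓ ∤ d`, and all `δ ∈ ℕ`.  Then `∑_{m≥1} |f(m)|` converges and is at most
`(∏_{ℓ ∣ M} (1 − |ℓ^κ|⁻¹)⁻¹) (∑_{m ∣ M} |f(m)|) (∑_{m≥1} |g(m)|)`. -/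
theorem stmt_1 (f g : ℕ → ℂ)
    (hf0 : ∀ m : ℕ, 0 < m → f m ≠ 0) (hg0 : ∀ m : ℕ, 0 < m → g m ≠ 0)
    (hg1 : g 1 = 1)
    (hgmult : ∀ m n : ℕ, Nat.Coprime m n → g (m * n) = g m * g n)
    (hgsum : Summable fun m : ℕ+ => ‖g (m : ℕ)‖)
    (M : ℕ) (hM : 0 < M) (κ : ℂ) (hκ : 0 < κ.re)
    (ha : ∀ m₁ m₂ : ℕ, 0 < m₁ → 0 < m₂ →
      (∀ p : ℕ, p.Prime → p ∣ m₁ → p ∣ M) → Nat.Coprime m₂ M →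
      f (m₁ * m₂) = f m₁ * g m₂)
    (hb : ∀ ℓ : ℕ, ℓ.Prime → ℓ ∣ M → ∀ d : ℕ, 0 < d →
      (∀ p : ℕ, p.Prime → p ∣ d → p ∣ M) → ¬ ℓ ∣ d → ∀ δ : ℕ,
      f (ℓ ^ (M.factorization ℓ + δ) * d) =
        (ℓ : ℂ) ^ (-(δ : ℂ) * κ) * f (ℓ ^ (M.factorization ℓ) * d)) :
    Summable (fun m : ℕ+ => ‖f (m : ℕ)‖) ∧
    ∑' m : ℕ+, ‖f (m : ℕ)‖ ≤
      (∏ ℓ ∈ M.primeFactors, (1 - ‖(ℓ : ℂ) ^ κ‖⁻¹)⁻¹) *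
        (∑ m ∈ M.divisors, ‖f m‖) * ∑' m : ℕ+, ‖g (m : ℕ)‖ := by
  classical
  have hprimes : ∀ p ∈ M.primeFactors, p.Prime := fun p hp => Nat.prime_of_mem_primeFactors hp
  have hS := smooth_hasSum κ.re hκ M.primeFactors hprimes
  have hFD : Summable (fun d : {d : ℕ // d ∈ M.divisors} => ‖f (d : ℕ)‖) := .of_finite
  have hInner : Summable
      (fun x : {n : ℕ // 0 < n ∧ ∀ p, p.Prime → p ∣ n → p ∈ M.primeFactors} × ℕ+ =>
        ((x.1 : ℕ) : ℝ) ^ (-κ.re) * ‖g ((x.2 : ℕ+) : ℕ)‖) :=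
    hS.summable.mul_of_nonneg hgsum
      (fun e => Real.rpow_nonneg (Nat.cast_nonneg _) _) (fun b => norm_nonneg _)
  have hGsum : Summable
      (fun x : {d : ℕ // d ∈ M.divisors} ×
          ({n : ℕ // 0 < n ∧ ∀ p, p.Prime → p ∣ n → p ∈ M.primeFactors} × ℕ+) =>
        ‖f (x.1 : ℕ)‖ * (((x.2.1 : ℕ) : ℝ) ^ (-κ.re) * ‖g ((x.2.2 : ℕ+) : ℕ)‖)) :=
    hFD.mul_of_nonneg hInner (fun d => norm_nonneg _)
      (fun x => mul_nonneg (Real.rpow_nonneg (Nat.cast_nonneg _) _) (norm_nonneg _))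
  have hval : ∀ m : ℕ+, ‖f (m : ℕ)‖ =
      ‖f ((auxι M hM m).1 : ℕ)‖ *
        ((((auxι M hM m).2.1 : ℕ) : ℝ) ^ (-κ.re) * ‖g (((auxι M hM m).2.2 : ℕ+) : ℕ)‖) := by
    intro m
    obtain ⟨hA0, hAd, hAp, hAcop⟩ := keyC' M hM m
    have hbpos : 0 < (m : ℕ) / auxA M m := Nat.div_pos (Nat.le_of_dvd m.2 hAd) hA0
    have hsplit : f (m : ℕ) = f (auxA M m) * g ((m : ℕ) / auxA M m) := by
      conv_lhs => rw [← Nat.mul_div_cancel' hAd]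
      exact ha _ _ hA0 hbpos hAp hAcop
    have hKB := keyB f M hM κ hb (auxA M m) hA0 hAp
    show ‖f (m : ℕ)‖ = ‖f ((auxA M m).gcd M)‖ *
      (((auxA M m / (auxA M m).gcd M : ℕ) : ℝ) ^ (-κ.re) * ‖g ((m : ℕ) / auxA M m)‖)
    rw [hsplit, norm_mul, hKB]
    ring
  have hinj := auxι_inj M hM
  have hfsum : Summable (fun m : ℕ+ => ‖f (m : ℕ)‖) :=
    (hGsum.comp_injective hinj).congr (fun m => (hval m).symm)
  refine ⟨hfsum, ?_⟩
  have hle : ∑' m : ℕ+, ‖f (m : ℕ)‖ ≤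
      ∑' x : {d : ℕ // d ∈ M.divisors} ×
          ({n : ℕ // 0 < n ∧ ∀ p, p.Prime → p ∣ n → p ∈ M.primeFactors} × ℕ+),
        ‖f (x.1 : ℕ)‖ * (((x.2.1 : ℕ) : ℝ) ^ (-κ.re) * ‖g ((x.2.2 : ℕ+) : ℕ)‖) :=
    Summable.tsum_le_tsum_of_inj (auxι M hM) hinj
      (fun x _ => mul_nonneg (norm_nonneg _)
        (mul_nonneg (Real.rpow_nonneg (Nat.cast_nonneg _) _) (norm_nonneg _)))
      (fun m => (hval m).le) hfsum hGsum
  have htsum2 : (∑' e : {n : ℕ // 0 < n ∧ ∀ p, p.Prime → p ∣ n → p ∈ M.primeFactors},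
        ((e : ℕ) : ℝ) ^ (-κ.re)) * (∑' b : ℕ+, ‖g ((b : ℕ+) : ℕ)‖)
      = ∑' x : {n : ℕ // 0 < n ∧ ∀ p, p.Prime → p ∣ n → p ∈ M.primeFactors} × ℕ+,
          ((x.1 : ℕ) : ℝ) ^ (-κ.re) * ‖g ((x.2 : ℕ+) : ℕ)‖ :=
    tsum_mul_tsum_of_summable_norm
      (by simpa [Real.norm_eq_abs] using hS.summable.abs)
      (by simpa using hgsum)
  have htsum1 : (∑' d : {d : ℕ // d ∈ M.divisors}, ‖f (d : ℕ)‖) *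
        (∑' x : {n : ℕ // 0 < n ∧ ∀ p, p.Prime → p ∣ n → p ∈ M.primeFactors} × ℕ+,
          ((x.1 : ℕ) : ℝ) ^ (-κ.re) * ‖g ((x.2 : ℕ+) : ℕ)‖)
      = ∑' x : {d : ℕ // d ∈ M.divisors} ×
          ({n : ℕ // 0 < n ∧ ∀ p, p.Prime → p ∣ n → p ∈ M.primeFactors} × ℕ+),
        ‖f (x.1 : ℕ)‖ * (((x.2.1 : ℕ) : ℝ) ^ (-κ.re) * ‖g ((x.2.2 : ℕ+) : ℕ)‖) :=
    tsum_mul_tsum_of_summable_norm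
      (by simpa using hFD)
      (hInner.congr (fun x => (Real.norm_of_nonneg (mul_nonneg
        (Real.rpow_nonneg (Nat.cast_nonneg _) _) (norm_nonneg _))).symm))
  have htD : (∑' d : {d : ℕ // d ∈ M.divisors}, ‖f (d : ℕ)‖) = ∑ m ∈ M.divisors, ‖f m‖ :=
    by exact Finset.tsum_subtype M.divisors (fun d => ‖f d‖)
  have hprod : ∏ ℓ ∈ M.primeFactors, (1 - ‖(ℓ : ℂ) ^ κ‖⁻¹)⁻¹
      = ∏ ℓ ∈ M.primeFactors, (1 - (ℓ : ℝ) ^ (-κ.re))⁻¹ :=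
    Finset.prod_congr rfl (fun ℓ hℓ => by
      rw [Complex.norm_natCast_cpow_of_pos (hprimes ℓ hℓ).pos, ← Real.rpow_neg (Nat.cast_nonneg _)])
  refine hle.trans (le_of_eq ?_)
  rw [← htsum1, ← htsum2, htD, hS.tsum_eq, hprod]
  ring
end

section
/- The sum over all positive integers m of φ(m)/|GL₂(ℤ/mℤ)| equals the Euler product over all primes ℓ of (1 + ℓ²/((ℓ²−1)(ℓ³−1))), and this product converges. -/
/-!
Write `f(m) = φ(m)/|GL₂(ℤ/mℤ)|`. By the Chinese remainder theorem `f` is multiplicative, and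
`f(m) ≤ 1/m²` because the matrices `[[u + bc, b], [c, 1]]` (`u` a unit) are distinct elements of
`GL₂(ℤ/mℤ)`; so the Euler product for `∑ f(m)` converges. Reduction mod `ℓ` is a surjection
`GL₂(ℤ/ℓ^(k+1)) → GL₂(𝔽_ℓ)` with kernel `1 + ℓ·M₂(ℤ/ℓ^(k+1))` of order `ℓ^(4k)`, whence
`f(ℓ^(k+1)) = ℓ^(-3k)/(ℓ(ℓ² - 1))` and each Euler factor is a geometric series.
-/

open Matrix

theorem Subgroup.card_eq_card_ker_mul_of_surjective {G H : Type*} [Group G] [Group H]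
    (f : G →* H) (hf : Function.Surjective f) : Nat.card G = Nat.card f.ker * Nat.card H := by
  rw [← f.ker.card_mul_index, Subgroup.index_ker, MonoidHom.range_eq_top.mpr hf,
    Subgroup.card_top]

theorem AddSubgroup.card_eq_card_ker_mul_of_surjective {G H : Type*} [AddGroup G] [AddGroup H]
    (f : G →+ H) (hf : Function.Surjective f) : Nat.card G = Nat.card f.ker * Nat.card H := by
  rw [← f.ker.card_mul_index, AddSubgroup.index_ker, AddMonoidHom.range_eq_top.mpr hf,
    AddSubgroup.card_top]

namespace Matrix

variable {n R S : Type*} [Fintype n]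

theorem card_eq_card_pow_sq (T : Type*) :
    Nat.card (Matrix n n T) = Nat.card T ^ Fintype.card n ^ 2 := by
  rw [Matrix, Nat.card_fun, Nat.card_fun, Nat.card_eq_fintype_card (α := n), ← pow_mul, sq]

variable [DecidableEq n]

def prodRingEquiv [Semiring R] [Semiring S] :
    Matrix n n (R × S) ≃+* Matrix n n R × Matrix n n S where
  toFun M := (M.map Prod.fst, M.map Prod.snd)
  invFun P := of fun i j => (P.1 i j, P.2 i j)
  left_inv _ := rfl
  right_inv _ := rfl
  map_add' _ _ := rfl
  map_mul' M N := by
    ext i j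
    · exact map_sum (RingHom.fst R S) _ _
    · exact map_sum (RingHom.snd R S) _ _

theorem card_GL_prod [CommRing R] [CommRing S] :
    Nat.card (GL n (R × S)) = Nat.card (GL n R) * Nat.card (GL n S) := by
  rw [← Nat.card_prod, ← Nat.card_congr MulEquiv.prodUnits.toEquiv]
  exact Nat.card_congr (Units.mapEquiv prodRingEquiv.toMulEquiv).toEquiv

theorem mapMatrix_surjective [Semiring R] [Semiring S] {f : R →+* S}
    (hf : Function.Surjective f) : Function.Surjective (f.mapMatrix : Matrix n n R → _) :=
  fun A => ⟨of fun i j => (hf (A i j)).choose, by ext i j; exact (hf (A i j)).choose_spec⟩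

theorem isUnit_of_isUnit_mapMatrix [CommRing R] [CommRing S] (f : R →+* S) [IsLocalHom f]
    {M : Matrix n n R} (hM : IsUnit (f.mapMatrix M)) : IsUnit M := by
  rw [isUnit_iff_isUnit_det] at hM ⊢
  exact isUnit_of_map_unit f _ (by rwa [RingHom.map_det])

/-- Units lift along a local homomorphism, so `g ↦ g - 1` identifies the kernel of
`GL n R → GL n S` with the kernel of `Matrix n n R → Matrix n n S`. -/
theorem card_GL_mul_card_pow [CommRing R] [CommRing S] (f : R →+* S) [IsLocalHom f]
    (hf : Function.Surjective f) :
    Nat.card (GL n R) * Nat.card S ^ Fintype.card n ^ 2 =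
      Nat.card R ^ Fintype.card n ^ 2 * Nat.card (GL n S) := by
  set F := GeneralLinearGroup.map (n := n) f
  set M := (f.mapMatrix : Matrix n n R →+* Matrix n n S).toAddMonoidHom
  have hM : Function.Surjective M := mapMatrix_surjective hf
  have hF : Function.Surjective F := fun g => by
    obtain ⟨A, hA⟩ := hM g
    exact ⟨(isUnit_of_isUnit_mapMatrix f (M := A) (hA ▸ g.isUnit)).unit, Units.ext hA⟩
  have hker : F.ker ≃ M.ker :=
    { toFun g := ⟨g.1 - 1, by
        have hg : f.mapMatrix (g.1 : Matrix n n R) = 1 := congrArg Units.val g.2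
        change f.mapMatrix _ = 0
        rw [map_sub, hg, map_one, sub_self]⟩
      invFun A :=
        have hA : f.mapMatrix (1 + A.1) = 1 := by
          rw [map_add, map_one, show f.mapMatrix A.1 = 0 from A.2, add_zero]
        ⟨(isUnit_of_isUnit_mapMatrix f (hA ▸ isUnit_one)).unit, Units.ext hA⟩
      left_inv g := by ext1; ext1; simp
      right_inv A := by ext1; simp }
  rw [← card_eq_card_pow_sq, ← card_eq_card_pow_sq,
    Subgroup.card_eq_card_ker_mul_of_surjective F hF,
    AddSubgroup.card_eq_card_ker_mul_of_surjective M hM, Nat.card_congr hker]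
  ring

theorem card_sq_mul_card_units_le_card_GL_two [CommRing R] [Finite R] :
    Nat.card R ^ 2 * Nat.card Rˣ ≤ Nat.card (GL (Fin 2) R) := by
  let g : R × R × Rˣ → GL (Fin 2) R := fun ⟨b, c, u⟩ =>
    nonsingInvUnit !![u + b * c, b; c, 1] (by simp [det_fin_two_of])
  have hg : Function.Injective g := by
    rintro ⟨b, c, u⟩ ⟨b', c', u'⟩ h
    have h' := congrArg (fun g : GL (Fin 2) R => (g : Matrix (Fin 2) (Fin 2) R)) h
    have hb : b = b' := by simpa [g, nonsingInvUnit] using congrFun (congrFun h' 0) 1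
    have hc : c = c' := by simpa [g, nonsingInvUnit] using congrFun (congrFun h' 1) 0
    have hu : (u : R) = u' := by
      simpa [g, nonsingInvUnit, hb, hc] using congrFun (congrFun h' 0) 0
    rw [hb, hc, Units.ext hu]
  simpa [Nat.card_prod, sq, mul_assoc] using Nat.card_le_card_of_injective g hg

end Matrix

theorem ZMod.isLocalHom_castHom_prime_pow {p k : ℕ} (hp : p.Prime) (hk : k ≠ 0) :
    IsLocalHom (ZMod.castHom (dvd_pow_self p hk) (ZMod p)) where
  map_nonunit x hx := by
    have : NeZero (p ^ k) := ⟨pow_ne_zero k hp.ne_zero⟩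
    rw [← ZMod.natCast_zmod_val x, map_natCast] at hx
    rw [← ZMod.natCast_zmod_val x, ZMod.isUnit_iff_coprime,
      Nat.coprime_pow_right_iff (Nat.pos_of_ne_zero hk), ← ZMod.isUnit_iff_coprime]
    exact hx

theorem ZMod.card_GL_two_prime_pow_mul {p : ℕ} (hp : p.Prime) (k : ℕ) :
    Nat.card (GL (Fin 2) (ZMod (p ^ (k + 1)))) * p ^ 4 =
      p ^ (4 * (k + 1)) * Nat.card (GL (Fin 2) (ZMod p)) := by
  have := ZMod.isLocalHom_castHom_prime_pow hp k.succ_ne_zero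
  simpa [Nat.card_zmod, ← pow_mul, mul_comm] using
    Matrix.card_GL_mul_card_pow (n := Fin 2) _ (ZMod.ringHom_surjective
      (ZMod.castHom (dvd_pow_self p k.succ_ne_zero) (ZMod p)))

/-- At `n = 0`, `GL₂(ℤ)` is infinite and `Nat.card` is `0`, so the value is `0`. -/
noncomputable def totientDivCardGL (n : ℕ) : ℝ :=
  (n.totient : ℝ) / (Nat.card (GL (Fin 2) (ZMod n)) : ℝ)

theorem totientDivCardGL_zero : totientDivCardGL 0 = 0 := by simp [totientDivCardGL]

theorem totientDivCardGL_one : totientDivCardGL 1 = 1 := by simp [totientDivCardGL]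

theorem totientDivCardGL_mul {m n : ℕ} (h : m.Coprime n) :
    totientDivCardGL (m * n) = totientDivCardGL m * totientDivCardGL n := by
  have hGL : Nat.card (GL (Fin 2) (ZMod (m * n))) =
      Nat.card (GL (Fin 2) (ZMod m)) * Nat.card (GL (Fin 2) (ZMod n)) := by
    rw [← Matrix.card_GL_prod]
    exact Nat.card_congr (Units.mapEquiv (ZMod.chineseRemainder h).mapMatrix.toMulEquiv).toEquiv
  simp only [totientDivCardGL, Nat.totient_mul h, hGL, Nat.cast_mul, mul_div_mul_comm]

theorem totientDivCardGL_le_one_div_sq (n : ℕ) : totientDivCardGL n ≤ 1 / (n : ℝ) ^ 2 := by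
  rcases n.eq_zero_or_pos with rfl | hn
  · simp [totientDivCardGL_zero]
  have : NeZero n := ⟨hn.ne'⟩
  have hφ : (0 : ℝ) < n.totient := by exact_mod_cast Nat.totient_pos.mpr hn
  have hGL : (n : ℝ) ^ 2 * n.totient ≤ Nat.card (GL (Fin 2) (ZMod n)) := by
    simpa [Nat.card_zmod, Nat.card_eq_fintype_card, ZMod.card_units_eq_totient] using
      (Nat.cast_le (α := ℝ)).mpr (Matrix.card_sq_mul_card_units_le_card_GL_two (R := ZMod n))
  calc totientDivCardGL n ≤ n.totient / ((n : ℝ) ^ 2 * n.totient) :=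
        div_le_div_of_nonneg_left hφ.le (by positivity) hGL
    _ = 1 / (n : ℝ) ^ 2 := by field_simp

theorem summable_norm_totientDivCardGL : Summable (fun n => ‖totientDivCardGL n‖) := by
  refine Summable.of_nonneg_of_le (fun n => norm_nonneg _) (fun n => ?_)
    (Real.summable_one_div_nat_pow.mpr one_lt_two)
  rw [Real.norm_of_nonneg (by unfold totientDivCardGL; positivity)]
  exact totientDivCardGL_le_one_div_sq n

theorem totientDivCardGL_prime_pow_succ {p : ℕ} (hp : p.Prime) (k : ℕ) :
    totientDivCardGL (p ^ (k + 1)) = (p * ((p : ℝ) ^ 2 - 1))⁻¹ * ((p : ℝ) ^ 3)⁻¹ ^ k := by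
  have hp1 : (1 : ℝ) < p := by exact_mod_cast hp.one_lt
  have hGL : (Nat.card (GL (Fin 2) (ZMod (p ^ (k + 1)))) : ℝ) =
      (p : ℝ) ^ (4 * k) * (((p : ℝ) ^ 2 - 1) * ((p : ℝ) ^ 2 - p)) := by
    have : Fact p.Prime := ⟨hp⟩
    have h := ZMod.card_GL_two_prime_pow_mul hp k
    rw [Matrix.card_GL_field, ZMod.card, Fin.prod_univ_two, Fin.val_zero, Fin.val_one,
      pow_zero, pow_one] at h
    have h' := congrArg (Nat.cast : ℕ → ℝ) h
    push_cast [Nat.cast_sub (Nat.one_le_pow _ _ hp.pos),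
      Nat.cast_sub (Nat.le_self_pow two_ne_zero p)] at h'
    have hp4 : (p : ℝ) ^ 4 ≠ 0 := by positivity
    rw [← mul_left_inj' hp4, h']
    ring
  rw [totientDivCardGL, Nat.totient_prime_pow_succ hp, hGL]
  push_cast [Nat.cast_sub hp.one_le]
  rw [inv_pow, ← pow_mul]
  have : (p : ℝ) - 1 ≠ 0 := by linarith
  have : (p : ℝ) ^ 2 - 1 ≠ 0 := sub_ne_zero.mpr (one_lt_pow₀ hp1 two_ne_zero).ne'
  field_simp
  ring

theorem tsum_totientDivCardGL_prime_pow (p : Nat.Primes) :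
    ∑' e, totientDivCardGL ((p : ℕ) ^ e) =
      1 + (p : ℝ) ^ 2 / (((p : ℝ) ^ 2 - 1) * ((p : ℝ) ^ 3 - 1)) := by
  have hp1 : (1 : ℝ) < p := by exact_mod_cast p.2.one_lt
  have hr : ((p : ℝ) ^ 3)⁻¹ < 1 := inv_lt_one_of_one_lt₀ (one_lt_pow₀ hp1 (by norm_num))
  have hs : Summable (fun e => totientDivCardGL ((p : ℕ) ^ e)) :=
    summable_norm_totientDivCardGL.of_norm.comp_injective (Nat.pow_right_injective p.2.two_le)
  rw [hs.tsum_eq_zero_add, pow_zero, totientDivCardGL_one]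
  simp only [totientDivCardGL_prime_pow_succ p.2]
  rw [tsum_mul_left, tsum_geometric_of_lt_one (by positivity) hr]
  have : (p : ℝ) ^ 2 - 1 ≠ 0 := sub_ne_zero.mpr (one_lt_pow₀ hp1 two_ne_zero).ne'
  have : (p : ℝ) ^ 3 - 1 ≠ 0 := sub_ne_zero.mpr (one_lt_pow₀ hp1 three_ne_zero).ne'
  field_simp

/-- The idealized constant `C_{d₁}`: the sum over all positive integers `m` of
`φ(m)/|GL₂(ℤ/mℤ)|` equals the Euler product over primes `ℓ` of
`1 + ℓ²/((ℓ²−1)(ℓ³−1))`, and this product converges. -/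
theorem stmt_2 :
    Multipliable (fun ℓ : Nat.Primes =>
      (1 + (ℓ : ℝ) ^ 2 / (((ℓ : ℝ) ^ 2 - 1) * ((ℓ : ℝ) ^ 3 - 1)))) ∧
    ∑' m : ℕ+, (Nat.totient m : ℝ) / (Nat.card (GL (Fin 2) (ZMod m)) : ℝ) =
      ∏' ℓ : Nat.Primes,
        (1 + (ℓ : ℝ) ^ 2 / (((ℓ : ℝ) ^ 2 - 1) * ((ℓ : ℝ) ^ 3 - 1))) := by
  have h := EulerProduct.eulerProduct_hasProd totientDivCardGL_one totientDivCardGL_mul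
    summable_norm_totientDivCardGL totientDivCardGL_zero
  simp only [tsum_totientDivCardGL_prime_pow] at h
  exact ⟨h.multipliable,
    (tsum_pnat_eq_tsum_of_eq_zero totientDivCardGL_zero).trans h.tprod_eq.symm⟩
end
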